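/- Let k > 0. There exists a constant C > 0, depending only on k, such that for every r ≥ 1 and every β ∈ ℝ with sin β ≠ 0, the improper integral ∫₁^∞ (d/dt)(f_β(t)^{−1/2}) · e^{i k r t} dt converges absolutely and satisfies |∫₁^∞ (d/dt)(f_β(t)^{−1/2}) e^{i k r t} dt| ≤ C·|sin β|^{−2}·r^{−1}. -/

import Mathlib

/-! With `u = t - cos β` one has `f_β = (u² + sin² β) / (2u)`, so `f_β ≥ u / 2`,
`f_β ≥ sin² β / (2u)` and `|f_β' / f_β| ≤ 1 / u`. For `g = f_β^{-1/2}`, one integration by parts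
bounds the integral by `(|g'(1)| + ∫₁^∞ |g''|) / (k r)`. Since `f_β(1) = 1` and
`1 - cos β ≥ sin² β / 2`, `|g'(1)| ≤ 1 / sin² β`; and `|g''| ≤ g / u² ≤ √2 u^{-3/2} / |sin β|`,
whose integral over `[1, ∞)` is at most `4 / sin² β`. -/

open Real MeasureTheory Set Filter Topology

/-- `fbeta β t = (t² − 2t·cos β + 1)/(2(t − cos β))`, the function `f_β` from the paper. -/
noncomputable def fbeta (β t : ℝ) : ℝ :=
  (t ^ 2 - 2 * t * Real.cos β + 1) / (2 * (t - Real.cos β))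

theorem integrableOn_ofReal_mul_exp_I_mul {φ : ℝ → ℝ} {s : Set ℝ} (L : ℝ)
    (hφ : IntegrableOn φ s) :
    IntegrableOn (fun t => (φ t : ℂ) * Complex.exp (Complex.I * ((L * t : ℝ) : ℂ))) s :=
  hφ.ofReal.mul_bdd (by fun_prop) (ae_of_all _ fun t => (Complex.norm_exp_I_mul_ofReal _).le)

theorem norm_integral_Ioi_ofReal_mul_exp_I_mul_le {φ φ' : ℝ → ℝ} {a L : ℝ} (hL : L ≠ 0)
    (hφ : ∀ t ∈ Ici a, HasDerivAt φ (φ' t) t) (hφ_int : IntegrableOn φ (Ioi a))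
    (hφ'_int : IntegrableOn φ' (Ioi a)) (hφ_lim : Tendsto φ atTop (𝓝 0)) :
    ‖∫ t in Ioi a, (φ t : ℂ) * Complex.exp (Complex.I * ((L * t : ℝ) : ℂ))‖ ≤
      (|φ a| + ∫ t in Ioi a, |φ' t|) / |L| := by
  obtain ⟨e, he⟩ : ∃ e : ℝ → ℂ, ∀ t, Complex.exp (Complex.I * ((L * t : ℝ) : ℂ)) = e t :=
    ⟨_, fun _ => rfl⟩
  have hφe_int := integrableOn_ofReal_mul_exp_I_mul L hφ_int
  have hφ'e_int := integrableOn_ofReal_mul_exp_I_mul L hφ'_int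
  simp only [he] at hφe_int hφ'e_int ⊢
  have he_norm (t : ℝ) : ‖e t‖ = 1 := he t ▸ Complex.norm_exp_I_mul_ofReal _
  have he_deriv (t : ℝ) : HasDerivAt e (Complex.I * L * e t) t := by
    have he_eq : e = fun t : ℝ => Complex.exp (t * (Complex.I * L)) :=
      funext fun t => by rw [← he]; push_cast; ring_nf
    rw [he_eq]
    exact (hasDerivAt_mul_const _).cexp.comp_ofReal.congr_deriv (mul_comm _ _)
  have hL' : (L : ℂ) ≠ 0 := Complex.ofReal_ne_zero.mpr hL
  have hIL : Complex.I * L ≠ 0 := mul_ne_zero Complex.I_ne_zero hL'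
  have hnorm_IL : ‖Complex.I * L‖ = |L| := by simp
  -- integration by parts: `φ e = (φ e / (i L))' - φ' e / (i L)`
  have hF (t : ℝ) (ht : t ∈ Ici a) : HasDerivAt (fun t => φ t * e t / (Complex.I * L))
      (φ' t * e t / (Complex.I * L) + φ t * e t) t :=
    (((hφ t ht).ofReal_comp.mul (he_deriv t)).div_const _).congr_deriv (by field_simp)
  have hF_lim : Tendsto (fun t => φ t * e t / (Complex.I * L)) atTop (𝓝 0) := by
    refine squeeze_zero_norm (fun t => ?_) (by simpa using hφ_lim.norm.div_const |L|)
    simp only [norm_div, norm_mul, Complex.norm_real, he_norm, mul_one, hnorm_IL,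
      Real.norm_eq_abs, le_refl]
  have hFTC := integral_Ioi_of_hasDerivAt_of_tendsto' hF
    ((hφ'e_int.div_const _).add hφe_int) hF_lim
  rw [integral_add (hφ'e_int.div_const _) hφe_int, integral_div] at hFTC
  have hφe : ∫ t in Ioi a, (φ t : ℂ) * e t =
      -(φ a * e a + ∫ t in Ioi a, φ' t * e t) / (Complex.I * L) := by
    field_simp at hFTC ⊢
    linear_combination hFTC
  have hnorm_φ'e : ‖∫ t in Ioi a, (φ' t : ℂ) * e t‖ ≤ ∫ t in Ioi a, |φ' t| :=
    (norm_integral_le_integral_norm _).trans_eq (by simp only [norm_mul, Complex.norm_real,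
      he_norm, mul_one, Real.norm_eq_abs])
  rw [hφe, norm_div, norm_neg, hnorm_IL]
  gcongr
  refine (norm_add_le _ _).trans (add_le_add ?_ hnorm_φ'e)
  simp only [norm_mul, Complex.norm_real, he_norm, mul_one, Real.norm_eq_abs, le_refl]

theorem HasDerivAt.rpow_const_of_logDeriv {f : ℝ → ℝ} {x R : ℝ} (p : ℝ)
    (hf : HasDerivAt f (f x * R) x) (hx : 0 < f x) :
    HasDerivAt (fun y => f y ^ p) (p * f x ^ p * R) x :=
  (hf.rpow_const (Or.inl hx.ne')).congr_deriv <| by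
    rw [rpow_sub_one hx.ne']
    field_simp

theorem cos_lt_one_of_sin_ne_zero {β : ℝ} (hβ : sin β ≠ 0) : cos β < 1 :=
  (cos_le_one β).lt_of_ne fun h => hβ (sin_eq_zero_iff_cos_eq.mpr (Or.inl h))

theorem sin_sq_div_two_le_one_sub_cos (β : ℝ) : sin β ^ 2 / 2 ≤ 1 - cos β := by
  nlinarith [sin_sq_add_cos_sq β, neg_one_le_cos β, cos_le_one β]

theorem tendsto_sub_rpow_atTop_of_neg {p : ℝ} (c : ℝ) (hp : p < 0) :
    Tendsto (fun t => (t - c) ^ p) atTop (𝓝 0) := by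
  have h := (tendsto_rpow_neg_atTop (neg_pos.mpr hp)).comp
    (tendsto_atTop_add_const_right atTop (-c) tendsto_id)
  rw [neg_neg] at h
  exact h.congr fun t => by simp [sub_eq_add_neg]

theorem integrableOn_Ioi_sub_rpow_of_lt {p c a : ℝ} (hp : p < -1) (hc : c < a) :
    IntegrableOn (fun t => (t - c) ^ p) (Ioi a) := by
  simpa only [← sub_eq_add_neg] using integrableOn_add_rpow_Ioi_of_lt hp (m := -c) (by simpa)

theorem integral_Ioi_sub_rpow_of_lt {p c a : ℝ} (hp : p < -1) (hc : c < a) :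
    ∫ t in Ioi a, (t - c) ^ p = -(a - c) ^ (p + 1) / (p + 1) := by
  have hd (t : ℝ) (ht : t ∈ Ici a) :
      HasDerivAt (fun t => (t - c) ^ (p + 1) / (p + 1)) ((t - c) ^ p) t := by
    refine ((((hasDerivAt_id' t).sub_const c).rpow_const (p := p + 1)
      (Or.inl (sub_pos.mpr (hc.trans_le ht)).ne')).div_const _).congr_deriv ?_
    field_simp [show p + 1 ≠ 0 by linarith]
    ring_nf
  have hlim : Tendsto (fun t => (t - c) ^ (p + 1) / (p + 1)) atTop (𝓝 0) := by
    simpa using (tendsto_sub_rpow_atTop_of_neg c (by linarith : p + 1 < 0)).div_const (p + 1)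
  rw [integral_Ioi_of_hasDerivAt_of_tendsto' hd (integrableOn_Ioi_sub_rpow_of_lt hp hc) hlim]
  ring

section Fbeta

variable {β t : ℝ}

theorem fbeta_eq (β t : ℝ) :
    fbeta β t = ((t - cos β) ^ 2 + sin β ^ 2) / (2 * (t - cos β)) := by
  rw [fbeta]
  congr 1
  linear_combination -sin_sq_add_cos_sq β

theorem fbeta_pos (h : cos β < t) : 0 < fbeta β t := by
  rw [fbeta_eq]
  have : 0 < t - cos β := sub_pos.mpr h
  positivity

theorem fbeta_one (hβ : cos β ≠ 1) : fbeta β 1 = 1 := by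
  rw [fbeta, div_eq_one_iff_eq (by intro h; apply hβ; linarith)]
  ring

theorem sub_cos_div_two_le_fbeta (h : cos β < t) : (t - cos β) / 2 ≤ fbeta β t := by
  have hu : 0 < t - cos β := sub_pos.mpr h
  rw [fbeta_eq, div_le_div_iff₀ two_pos (by positivity)]
  nlinarith [sq_nonneg (sin β)]

theorem sin_sq_div_two_div_le_fbeta (h : cos β < t) :
    sin β ^ 2 / 2 / (t - cos β) ≤ fbeta β t := by
  have hu : 0 < t - cos β := sub_pos.mpr h
  rw [fbeta_eq, div_div, div_le_div_iff₀ (by positivity) (by positivity)]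
  nlinarith [sq_nonneg (t - cos β), sq_nonneg (sin β)]

noncomputable def fbetaLogDeriv (β t : ℝ) : ℝ :=
  ((t - cos β) ^ 2 - sin β ^ 2) / ((t - cos β) * ((t - cos β) ^ 2 + sin β ^ 2))

theorem hasDerivAt_fbeta (h : cos β < t) :
    HasDerivAt (fbeta β) (fbeta β t * fbetaLogDeriv β t) t := by
  have hu : 0 < t - cos β := sub_pos.mpr h
  have hN := ((hasDerivAt_id' t).sub_const (cos β)).fun_pow 2 |>.add_const (sin β ^ 2)
  have hD := ((hasDerivAt_id' t).sub_const (cos β)).const_mul 2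
  rw [show fbeta β = _ from funext (fbeta_eq β)]
  refine (hN.fun_div hD (by positivity)).congr_deriv ?_
  rw [fbetaLogDeriv]
  field_simp
  ring

theorem hasDerivAt_fbetaLogDeriv (h : cos β < t) :
    HasDerivAt (fbetaLogDeriv β)
      (2 * sin β ^ 2 / ((t - cos β) ^ 2 * ((t - cos β) ^ 2 + sin β ^ 2)) -
        fbetaLogDeriv β t ^ 2) t := by
  have hu : 0 < t - cos β := sub_pos.mpr h
  have hu' := (hasDerivAt_id' t).sub_const (cos β)
  have hN := hu'.fun_pow 2 |>.sub_const (sin β ^ 2)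
  have hD := hu'.fun_mul (hu'.fun_pow 2 |>.add_const (sin β ^ 2))
  refine (hN.fun_div hD (by positivity)).congr_deriv ?_
  rw [fbetaLogDeriv]
  field_simp
  ring

theorem abs_fbetaLogDeriv_le (h : cos β < t) : |fbetaLogDeriv β t| ≤ (t - cos β)⁻¹ := by
  have hu : 0 < t - cos β := sub_pos.mpr h
  have hD : 0 < (t - cos β) * ((t - cos β) ^ 2 + sin β ^ 2) := by positivity
  rw [fbetaLogDeriv, abs_div, abs_of_pos hD, div_le_iff₀ hD, inv_mul_cancel_left₀ hu.ne', abs_le]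
  constructor <;> nlinarith [sq_nonneg (sin β), sq_nonneg (t - cos β)]

noncomputable def fbetaInvSqrtDeriv (β t : ℝ) : ℝ :=
  -(1 / 2) * fbeta β t ^ (-(1 / 2) : ℝ) * fbetaLogDeriv β t

/-- `(f^{-1/2})'' = f^{-1/2} ((3/4) (f'/f)² - f''/(2f))`, where
`f''/f = 2 sin² β / (u² (u² + sin² β))` for `u = t - cos β`. -/
noncomputable def fbetaInvSqrtDeriv2 (β t : ℝ) : ℝ :=
  fbeta β t ^ (-(1 / 2) : ℝ) * (3 / 4 * fbetaLogDeriv β t ^ 2 -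
    sin β ^ 2 / ((t - cos β) ^ 2 * ((t - cos β) ^ 2 + sin β ^ 2)))

theorem hasDerivAt_fbeta_rpow_neg_half (h : cos β < t) :
    HasDerivAt (fun s => fbeta β s ^ (-(1 / 2) : ℝ)) (fbetaInvSqrtDeriv β t) t :=
  (hasDerivAt_fbeta h).rpow_const_of_logDeriv _ (fbeta_pos h)

theorem hasDerivAt_fbetaInvSqrtDeriv (h : cos β < t) :
    HasDerivAt (fbetaInvSqrtDeriv β) (fbetaInvSqrtDeriv2 β t) t := by
  refine (((hasDerivAt_fbeta_rpow_neg_half h).const_mul (-(1 / 2) : ℝ)).mul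
    (hasDerivAt_fbetaLogDeriv h)).congr_deriv ?_
  simp only [fbetaInvSqrtDeriv, fbetaInvSqrtDeriv2]
  ring

theorem abs_fbetaInvSqrtDeriv_le (h : cos β < t) :
    |fbetaInvSqrtDeriv β t| ≤ fbeta β t ^ (-(1 / 2) : ℝ) * (t - cos β)⁻¹ / 2 := by
  have hf := rpow_nonneg (fbeta_pos h).le (-(1 / 2) : ℝ)
  rw [fbetaInvSqrtDeriv, abs_mul, abs_mul, abs_of_nonneg hf, abs_neg, abs_of_pos one_half_pos]
  have := mul_le_mul_of_nonneg_left (abs_fbetaLogDeriv_le h) hf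
  linarith

theorem abs_fbetaInvSqrtDeriv2_le (h : cos β < t) :
    |fbetaInvSqrtDeriv2 β t| ≤ fbeta β t ^ (-(1 / 2) : ℝ) * ((t - cos β) ^ 2)⁻¹ := by
  have hu : 0 < t - cos β := sub_pos.mpr h
  have hf := rpow_nonneg (fbeta_pos h).le (-(1 / 2) : ℝ)
  have hR : fbetaLogDeriv β t ^ 2 ≤ ((t - cos β) ^ 2)⁻¹ := by
    rw [← inv_pow, ← sq_abs]
    exact pow_le_pow_left₀ (abs_nonneg _) (abs_fbetaLogDeriv_le h) 2
  have hS : sin β ^ 2 / ((t - cos β) ^ 2 * ((t - cos β) ^ 2 + sin β ^ 2)) ≤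
      ((t - cos β) ^ 2)⁻¹ := by
    rw [div_le_iff₀ (by positivity), inv_mul_cancel_left₀ (by positivity)]
    nlinarith [sq_nonneg (t - cos β)]
  have hS₀ : 0 ≤ sin β ^ 2 / ((t - cos β) ^ 2 * ((t - cos β) ^ 2 + sin β ^ 2)) := by positivity
  rw [fbetaInvSqrtDeriv2, abs_mul, abs_of_nonneg hf]
  refine mul_le_mul_of_nonneg_left (abs_le.mpr ⟨?_, ?_⟩) hf <;>
    nlinarith [sq_nonneg (fbetaLogDeriv β t)]

theorem div_two_rpow_neg_half {x : ℝ} (hx : 0 ≤ x) :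
    (x / 2) ^ (-(1 / 2) : ℝ) = √2 * x ^ (-(1 / 2) : ℝ) := by
  rw [div_rpow hx zero_le_two, rpow_neg zero_le_two, ← sqrt_eq_rpow, div_inv_eq_mul, mul_comm]

theorem fbeta_rpow_neg_half_le (h : cos β < t) :
    fbeta β t ^ (-(1 / 2) : ℝ) ≤ √2 * (t - cos β) ^ (-(1 / 2) : ℝ) := by
  have hu : 0 < t - cos β := sub_pos.mpr h
  rw [← div_two_rpow_neg_half hu.le]
  exact rpow_le_rpow_of_nonpos (by positivity) (sub_cos_div_two_le_fbeta h) (by norm_num)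

theorem fbeta_rpow_neg_half_le_of_sin_ne_zero (hβ : sin β ≠ 0) (h : cos β < t) :
    fbeta β t ^ (-(1 / 2) : ℝ) ≤
      (sin β ^ 2 / 2) ^ (-(1 / 2) : ℝ) * (t - cos β) ^ (1 / 2 : ℝ) := by
  have hu : 0 < t - cos β := sub_pos.mpr h
  have hσ : 0 < sin β ^ 2 / 2 := by positivity
  calc fbeta β t ^ (-(1 / 2) : ℝ) ≤ (sin β ^ 2 / 2 / (t - cos β)) ^ (-(1 / 2) : ℝ) :=
        rpow_le_rpow_of_nonpos (by positivity) (sin_sq_div_two_div_le_fbeta h) (by norm_num)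
    _ = _ := by rw [div_rpow hσ.le hu.le, rpow_neg hu.le, div_inv_eq_mul]

theorem abs_fbetaInvSqrtDeriv_le_rpow (h : cos β < t) :
    |fbetaInvSqrtDeriv β t| ≤ √2 / 2 * (t - cos β) ^ (-(3 / 2) : ℝ) := by
  have hu : 0 < t - cos β := sub_pos.mpr h
  calc |fbetaInvSqrtDeriv β t| ≤ fbeta β t ^ (-(1 / 2) : ℝ) * (t - cos β)⁻¹ / 2 :=
        abs_fbetaInvSqrtDeriv_le h
    _ ≤ √2 * (t - cos β) ^ (-(1 / 2) : ℝ) * (t - cos β)⁻¹ / 2 := by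
        gcongr
        exact fbeta_rpow_neg_half_le h
    _ = √2 / 2 * (t - cos β) ^ (-(3 / 2) : ℝ) := by
        rw [← rpow_neg_one, mul_assoc, ← rpow_add hu]
        norm_num
        ring

theorem abs_fbetaInvSqrtDeriv2_le_rpow (hβ : sin β ≠ 0) (h : cos β < t) :
    |fbetaInvSqrtDeriv2 β t| ≤
      (sin β ^ 2 / 2) ^ (-(1 / 2) : ℝ) * (t - cos β) ^ (-(3 / 2) : ℝ) := by
  have hu : 0 < t - cos β := sub_pos.mpr h
  calc |fbetaInvSqrtDeriv2 β t| ≤ fbeta β t ^ (-(1 / 2) : ℝ) * ((t - cos β) ^ 2)⁻¹ :=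
        abs_fbetaInvSqrtDeriv2_le h
    _ ≤ (sin β ^ 2 / 2) ^ (-(1 / 2) : ℝ) * (t - cos β) ^ (1 / 2 : ℝ) *
          ((t - cos β) ^ 2)⁻¹ := by
        gcongr
        exact fbeta_rpow_neg_half_le_of_sin_ne_zero hβ h
    _ = (sin β ^ 2 / 2) ^ (-(1 / 2) : ℝ) * (t - cos β) ^ (-(3 / 2) : ℝ) := by
        rw [← rpow_two (t - cos β), ← rpow_neg hu.le, mul_assoc, ← rpow_add hu]
        norm_num

theorem integrableOn_fbetaInvSqrtDeriv {a : ℝ} (ha : cos β < a) :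
    IntegrableOn (fbetaInvSqrtDeriv β) (Ioi a) := by
  have hmeas : AEStronglyMeasurable (fbetaInvSqrtDeriv β) (volume.restrict (Ioi a)) := by
    refine ContinuousOn.aestronglyMeasurable (fun t ht => ?_) measurableSet_Ioi
    exact (hasDerivAt_fbetaInvSqrtDeriv (ha.trans ht)).continuousAt.continuousWithinAt
  refine ((integrableOn_Ioi_sub_rpow_of_lt (p := -(3 / 2)) (by norm_num) ha).const_mul
    (√2 / 2)).mono' hmeas ?_
  filter_upwards [ae_restrict_mem measurableSet_Ioi] with t ht
  exact abs_fbetaInvSqrtDeriv_le_rpow (ha.trans ht)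

theorem tendsto_fbetaInvSqrtDeriv_atTop : Tendsto (fbetaInvSqrtDeriv β) atTop (𝓝 0) := by
  have hlim := (tendsto_sub_rpow_atTop_of_neg (cos β) (by norm_num : -(3 / 2 : ℝ) < 0)).const_mul
    (√2 / 2)
  refine squeeze_zero_norm' ?_ (by simpa using hlim)
  filter_upwards [eventually_gt_atTop (cos β)] with t ht
  exact abs_fbetaInvSqrtDeriv_le_rpow ht

theorem integrableOn_fbetaInvSqrtDeriv2 (hβ : sin β ≠ 0) {a : ℝ} (ha : cos β < a) :
    IntegrableOn (fbetaInvSqrtDeriv2 β) (Ioi a) := by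
  have hmeas : Measurable (fbetaInvSqrtDeriv2 β) := by
    unfold fbetaInvSqrtDeriv2 fbetaLogDeriv fbeta
    fun_prop
  refine ((integrableOn_Ioi_sub_rpow_of_lt (p := -(3 / 2)) (by norm_num) ha).const_mul
    ((sin β ^ 2 / 2) ^ (-(1 / 2) : ℝ))).mono' hmeas.aestronglyMeasurable ?_
  filter_upwards [ae_restrict_mem measurableSet_Ioi] with t ht
  exact abs_fbetaInvSqrtDeriv2_le_rpow hβ (ha.trans ht)

theorem abs_fbetaInvSqrtDeriv_one_le (hβ : sin β ≠ 0) :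
    |fbetaInvSqrtDeriv β 1| ≤ 1 / sin β ^ 2 := by
  have hc := cos_lt_one_of_sin_ne_zero hβ
  have h := abs_fbetaInvSqrtDeriv_le hc
  rw [fbeta_one hc.ne, one_rpow, one_mul] at h
  calc |fbetaInvSqrtDeriv β 1| ≤ (1 - cos β)⁻¹ / 2 := h
    _ = 1 / (2 * (1 - cos β)) := by rw [mul_comm, ← div_div, one_div]
    _ ≤ 1 / sin β ^ 2 := one_div_le_one_div_of_le (by positivity)
        (by linarith [sin_sq_div_two_le_one_sub_cos β])

theorem integral_abs_fbetaInvSqrtDeriv2_le (hβ : sin β ≠ 0) :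
    ∫ t in Ioi 1, |fbetaInvSqrtDeriv2 β t| ≤ 4 / sin β ^ 2 := by
  have hc := cos_lt_one_of_sin_ne_zero hβ
  have hσ : 0 < sin β ^ 2 / 2 := by positivity
  set K := (sin β ^ 2 / 2) ^ (-(1 / 2) : ℝ)
  have hK : K ^ 2 = 2 / sin β ^ 2 := by
    rw [← rpow_natCast, ← rpow_mul hσ.le]
    norm_num [rpow_neg_one]
  have hK_le : (1 - cos β) ^ (-(1 / 2) : ℝ) ≤ K :=
    rpow_le_rpow_of_nonpos hσ (sin_sq_div_two_le_one_sub_cos β) (by norm_num)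
  calc ∫ t in Ioi 1, |fbetaInvSqrtDeriv2 β t|
      ≤ ∫ t in Ioi 1, K * (t - cos β) ^ (-(3 / 2) : ℝ) :=
        setIntegral_mono_on (integrableOn_fbetaInvSqrtDeriv2 hβ hc).abs
          ((integrableOn_Ioi_sub_rpow_of_lt (by norm_num) hc).const_mul K) measurableSet_Ioi
          fun t ht => abs_fbetaInvSqrtDeriv2_le_rpow hβ (hc.trans ht)
    _ = 2 * K * (1 - cos β) ^ (-(1 / 2) : ℝ) := by
        rw [integral_const_mul, integral_Ioi_sub_rpow_of_lt (by norm_num) hc]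
        norm_num
        ring
    _ ≤ 2 * K * K := by gcongr
    _ = 4 / sin β ^ 2 := by rw [mul_assoc, ← sq, hK]; ring

end Fbeta

/-- for `k > 0` there is a constant `C > 0` (depending only on `k`) such that
for all `r ≥ 1` and all `β` with `sin β ≠ 0`, the integral
`∫₁^∞ (d/dt)(f_β(t)^{−1/2})) e^{i k r t} dt` converges absolutely and is bounded by
`C·|sin β|^{−2}·r^{−1}`. -/
theorem stmt2 (k : ℝ) (hk : 0 < k) :
    ∃ C > 0, ∀ r β : ℝ, 1 ≤ r → Real.sin β ≠ 0 →
      MeasureTheory.IntegrableOn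
        (fun t : ℝ =>
          ((deriv (fun s : ℝ => fbeta β s ^ (-(1 / 2) : ℝ)) t : ℝ) : ℂ) *
            Complex.exp (Complex.I * ((k * r * t : ℝ) : ℂ)))
        (Set.Ici 1) ∧
      ‖∫ t in Set.Ici (1 : ℝ),
          ((deriv (fun s : ℝ => fbeta β s ^ (-(1 / 2) : ℝ)) t : ℝ) : ℂ) *
            Complex.exp (Complex.I * ((k * r * t : ℝ) : ℂ))‖ ≤
        C * (|Real.sin β| ^ 2)⁻¹ * r⁻¹ := by
  refine ⟨5 / k, by positivity, fun r β hr hβ => ?_⟩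
  have hc := cos_lt_one_of_sin_ne_zero hβ
  have hkr : 0 < k * r := by positivity
  have hEq (t : ℝ) (ht : t ∈ Ioi 1) :
      ((deriv (fun s => fbeta β s ^ (-(1 / 2) : ℝ)) t : ℝ) : ℂ) *
        Complex.exp (Complex.I * ((k * r * t : ℝ) : ℂ)) =
      (fbetaInvSqrtDeriv β t : ℂ) * Complex.exp (Complex.I * ((k * r * t : ℝ) : ℂ)) := by
    rw [(hasDerivAt_fbeta_rpow_neg_half (hc.trans ht)).deriv]
  have hint := integrableOn_ofReal_mul_exp_I_mul (k * r) (integrableOn_fbetaInvSqrtDeriv hc)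
  refine ⟨(integrableOn_Ici_iff_integrableOn_Ioi).mpr
    (hint.congr_fun (fun t ht => (hEq t ht).symm) measurableSet_Ioi), ?_⟩
  rw [integral_Ici_eq_integral_Ioi, setIntegral_congr_fun measurableSet_Ioi hEq]
  calc _ ≤ (|fbetaInvSqrtDeriv β 1| + ∫ t in Ioi 1, |fbetaInvSqrtDeriv2 β t|) / |k * r| :=
        norm_integral_Ioi_ofReal_mul_exp_I_mul_le hkr.ne'
          (fun t ht => hasDerivAt_fbetaInvSqrtDeriv (hc.trans_le ht))
          (integrableOn_fbetaInvSqrtDeriv hc) (integrableOn_fbetaInvSqrtDeriv2 hβ hc)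
          tendsto_fbetaInvSqrtDeriv_atTop
    _ ≤ (1 / sin β ^ 2 + 4 / sin β ^ 2) / (k * r) := by
        rw [abs_of_pos hkr]
        gcongr
        exacts [abs_fbetaInvSqrtDeriv_one_le hβ, integral_abs_fbetaInvSqrtDeriv2_le hβ]
    _ = 5 / k * (|sin β| ^ 2)⁻¹ * r⁻¹ := by
        rw [sq_abs]
        field_simp
        ring
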